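/- arXiv:2305.04020 — 3 statements merged into one kernel-verified Lean document; each statement's English description precedes it below -/
import Mathlib

section
/- Let q₁, q₂, q₃, q₄ be positive integers with (q₁q₂, q₃q₄) = (q₁, q₂) = (q₃, q₄) = 1, and define λ(a, b, l, m, n) = ∑_{1 ≤ x,y,z ≤ ab, x²+y²+z²+z+1 ≡ 0 (mod a), x²+y²+z²+z+2 ≡ 0 (mod b)} e((lx+my+nz)/(ab)). Then λ(q₁q₂, q₃q₄, l, m, n) = λ(q₁, q₃, l·u, m·u, n·u) · λ(q₂, q₄, l·v, m·v, n·v), where u is the inverse of q₂q₄ modulo q₁q₃ and v is the inverse of q₁q₃ modulo q₂q₄. -/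
open Finset

noncomputable def e (t : ℝ) : ℂ := Complex.exp (2 * Real.pi * Complex.I * t)

/-- λ(a, b, l, m, n): exponential sum over triples (x,y,z) mod ab with
x²+y²+z²+z+1 ≡ 0 (mod a) and x²+y²+z²+z+2 ≡ 0 (mod b). -/
noncomputable def lam (a b : ℕ) (l m n : ℤ) : ℂ :=
  ∑ x ∈ Finset.Icc 1 (a * b), ∑ y ∈ Finset.Icc 1 (a * b), ∑ z ∈ Finset.Icc 1 (a * b),
    if a ∣ (x ^ 2 + y ^ 2 + z ^ 2 + z + 1) ∧ b ∣ (x ^ 2 + y ^ 2 + z ^ 2 + z + 2) then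
      e (((l * (x : ℤ) + m * (y : ℤ) + n * (z : ℤ) : ℤ) : ℝ) / ((a * b : ℕ) : ℝ))
    else 0

/-
Chinese remaindering with A = q₁q₃ and B = q₂q₄, so that q₁q₂ · q₃q₄ = AB. The summand
depends on x, y, z only modulo AB. Since (q₁, q₂) = (q₃, q₄) = 1, its two divisibility
conditions split into conditions modulo q₁, q₃ (seen modulo A) and modulo q₂, q₄ (seen modulo
B), and e(k/AB) = e(uk/A) e(vk/B) because Bu + Av ≡ 1 (mod AB). Hence the summand is the
product of a function of the residues modulo A and a function of the residues modulo B, and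
the ring isomorphism ZMod (AB) ≃ ZMod A × ZMod B turns the sum into the product of the two
sums.
-/

theorem e_add (s t : ℝ) : e (s + t) = e s * e t := by
  simp only [e, ← Complex.exp_add]
  push_cast
  ring_nf

theorem e_intCast (k : ℤ) : e k = 1 := by
  simpa [e, mul_comm] using Complex.exp_int_mul_two_pi_mul_I k

theorem e_intCast_div_congr {N : ℕ} {k k' : ℤ} (h : k ≡ k' [ZMOD N]) :
    e (k / N) = e (k' / N) := by
  rcases eq_or_ne N 0 with rfl | hN
  · simp_all [Int.ModEq]
  obtain ⟨j, hj⟩ := (Int.modEq_iff_dvd.mp h.symm)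
  have : (k : ℝ) / N = j + k' / N := by
    rw [show k = k' + N * j by linarith]
    push_cast
    field_simp
    ring
  rw [this, e_add, e_intCast, one_mul]

-- `A B ∣ (1 - B u) (1 - A v)`, so `B u + A v ≡ 1 (mod A B)`.
theorem e_intCast_div_mul {A B : ℕ} (hA : A ≠ 0) (hB : B ≠ 0) {u v : ℤ}
    (hu : (B : ℤ) * u ≡ 1 [ZMOD A]) (hv : (A : ℤ) * v ≡ 1 [ZMOD B]) (k : ℤ) :
    e (k / ((A * B : ℕ) : ℝ)) = e ((u * k : ℤ) / A) * e ((v * k : ℤ) / B) := by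
  have hAB : (A * B : ℤ) ∣ (1 - B * u) * (1 - A * v) :=
    mul_dvd_mul (Int.ModEq.dvd hu) (Int.ModEq.dvd hv)
  have hk : B * (u * k) + A * (v * k) ≡ k [ZMOD (A * B : ℕ)] := by
    refine Int.modEq_iff_dvd.mpr ?_
    rw [show k - (B * (u * k) + A * (v * k)) = (1 - B * u) * (1 - A * v) * k - A * B * (u * v * k)
      by ring]
    push_cast
    exact (hAB.mul_right k).sub (dvd_mul_right _ _)
  rw [← e_intCast_div_congr hk, ← e_add]
  congr 1
  push_cast
  field_simp

theorem sum_Icc_one_eq_sum_zmod {M : Type*} [AddCommMonoid M] {N : ℕ} [NeZero N] (f : ℕ → M)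
    (hf : f N = f 0) : ∑ x ∈ Icc 1 N, f x = ∑ x : ZMod N, f x.val := by
  have hN : 0 < N := Nat.pos_of_neZero N
  rw [Icc_eq_cons_Ico hN, sum_cons, hf, ← sum_eq_sum_Ico_succ_bot hN, ← range_eq_Ico]
  obtain ⟨k, rfl⟩ := Nat.exists_eq_succ_of_ne_zero (NeZero.ne N)
  exact (Fin.sum_univ_eq_sum_range f (k + 1)).symm

theorem ZMod.chineseRemainder_apply {A B : ℕ} [NeZero A] [NeZero B] (h : A.Coprime B)
    (x : ZMod (A * B)) : ZMod.chineseRemainder h x = (x.cast, x.cast) := by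
  change ZMod.cast x = _
  rw [ZMod.cast_eq_val, ZMod.cast_eq_val, ZMod.cast_eq_val]
  rfl

theorem ZMod.sum_cast_cast_of_coprime {M : Type*} [AddCommMonoid M] {A B : ℕ} [NeZero A]
    [NeZero B] (h : A.Coprime B) (f : ZMod A → ZMod B → M) :
    ∑ x : ZMod (A * B), f x.cast x.cast = ∑ s, ∑ t, f s t := by
  rw [← Fintype.sum_prod_type', ← (ZMod.chineseRemainder h).toEquiv.sum_comp]
  simp only [RingEquiv.toEquiv_eq_coe, EquivLike.coe_coe, ZMod.chineseRemainder_apply]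

theorem ZMod.sum_cast_mul_cast_of_coprime {R : Type*} [CommSemiring R] {A B : ℕ} [NeZero A]
    [NeZero B] (h : A.Coprime B) (f : ZMod A → ZMod A → ZMod A → R)
    (g : ZMod B → ZMod B → ZMod B → R) :
    ∑ x : ZMod (A * B), ∑ y : ZMod (A * B), ∑ z : ZMod (A * B),
      f x.cast y.cast z.cast * g x.cast y.cast z.cast =
      (∑ x, ∑ y, ∑ z, f x y z) * ∑ x, ∑ y, ∑ z, g x y z := by
  simp only [Fintype.sum_mul_sum, ← ZMod.sum_cast_cast_of_coprime h]

theorem ZMod.val_modEq_val_cast {N : ℕ} [NeZero N] (d : ℕ) (w : ZMod N) :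
    w.val ≡ (w.cast : ZMod d).val [MOD d] := by
  rw [ZMod.cast_eq_val, ZMod.val_natCast]
  exact (Nat.mod_modEq _ _).symm

theorem Nat.Coprime.mul_dvd_iff_dvd_and_dvd {a b k : ℕ} (h : a.Coprime b) :
    a * b ∣ k ↔ a ∣ k ∧ b ∣ k := by
  rw [← h.lcm_eq_mul, Nat.lcm_dvd_iff]

noncomputable def lamTerm (a b : ℕ) (l m n : ℤ) (x y z : ℕ) : ℂ :=
  if a ∣ (x ^ 2 + y ^ 2 + z ^ 2 + z + 1) ∧ b ∣ (x ^ 2 + y ^ 2 + z ^ 2 + z + 2) then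
    e (((l * (x : ℤ) + m * (y : ℤ) + n * (z : ℤ) : ℤ) : ℝ) / ((a * b : ℕ) : ℝ))
  else 0

theorem lamTerm_congr {a b : ℕ} (l m n : ℤ) {x y z x' y' z' : ℕ} (hx : x ≡ x' [MOD a * b])
    (hy : y ≡ y' [MOD a * b]) (hz : z ≡ z' [MOD a * b]) :
    lamTerm a b l m n x y z = lamTerm a b l m n x' y' z' := by
  have hQ (c : ℕ) : x ^ 2 + y ^ 2 + z ^ 2 + z + c ≡ x' ^ 2 + y' ^ 2 + z' ^ 2 + z' + c
      [MOD a * b] :=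
    ((((hx.pow 2).add (hy.pow 2)).add (hz.pow 2)).add hz).add_right c
  have hL : l * (x : ℤ) + m * y + n * z ≡ l * x' + m * y' + n * z' [ZMOD (a * b : ℕ)] := by
    simp only [← Int.natCast_modEq_iff] at hx hy hz
    exact ((hx.mul_left l).add (hy.mul_left m)).add (hz.mul_left n)
  unfold lamTerm
  exact if_congr ((hQ 1).dvd_iff (dvd_mul_right a b) |>.and ((hQ 2).dvd_iff (dvd_mul_left b a)))
    (e_intCast_div_congr hL) rfl

theorem lamTerm_mul {q₁ q₂ q₃ q₄ : ℕ} (hA : q₁ * q₃ ≠ 0) (hB : q₂ * q₄ ≠ 0)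
    (hco₂ : q₁.Coprime q₂) (hco₃ : q₃.Coprime q₄) {u v : ℤ}
    (hu : ((q₂ * q₄ : ℕ) : ℤ) * u ≡ 1 [ZMOD ((q₁ * q₃ : ℕ) : ℤ)])
    (hv : ((q₁ * q₃ : ℕ) : ℤ) * v ≡ 1 [ZMOD ((q₂ * q₄ : ℕ) : ℤ)]) (l m n : ℤ) (x y z : ℕ) :
    lamTerm (q₁ * q₂) (q₃ * q₄) l m n x y z =
      lamTerm q₁ q₃ (l * u) (m * u) (n * u) x y z *
        lamTerm q₂ q₄ (l * v) (m * v) (n * v) x y z := by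
  unfold lamTerm
  rw [ite_zero_mul_ite_zero]
  refine if_congr ?_ ?_ rfl
  · rw [hco₂.mul_dvd_iff_dvd_and_dvd, hco₃.mul_dvd_iff_dvd_and_dvd]
    tauto
  · rw [mul_mul_mul_comm, e_intCast_div_mul hA hB hu hv]
    push_cast
    ring_nf

-- The modulus is a separate `N` so that `lam (q₁ * q₂) (q₃ * q₄)` can be summed over
-- `ZMod (q₁ * q₃ * (q₂ * q₄))`.
theorem lam_eq_sum_zmod (a b : ℕ) (l m n : ℤ) {N : ℕ} [NeZero N] (hN : a * b = N) :
    lam a b l m n =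
      ∑ x : ZMod N, ∑ y : ZMod N, ∑ z : ZMod N, lamTerm a b l m n x.val y.val z.val := by
  subst hN
  have hper : a * b ≡ 0 [MOD a * b] := Nat.modEq_zero_iff_dvd.mpr dvd_rfl
  change ∑ x ∈ Icc 1 (a * b), ∑ y ∈ Icc 1 (a * b), ∑ z ∈ Icc 1 (a * b),
    lamTerm a b l m n x y z = _
  rw [sum_Icc_one_eq_sum_zmod _ (sum_congr rfl fun y _ => sum_congr rfl fun z _ =>
    lamTerm_congr l m n hper rfl rfl)]
  refine Fintype.sum_congr _ _ fun x => ?_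
  rw [sum_Icc_one_eq_sum_zmod _ (sum_congr rfl fun z _ => lamTerm_congr l m n rfl hper rfl)]
  refine Fintype.sum_congr _ _ fun y => ?_
  exact sum_Icc_one_eq_sum_zmod _ (lamTerm_congr l m n rfl rfl hper)

theorem lam_multiplicative (q₁ q₂ q₃ q₄ : ℕ) (h₁ : 0 < q₁) (h₂ : 0 < q₂) (h₃ : 0 < q₃)
    (h₄ : 0 < q₄) (hco₁ : Nat.Coprime (q₁ * q₂) (q₃ * q₄)) (hco₂ : Nat.Coprime q₁ q₂)
    (hco₃ : Nat.Coprime q₃ q₄) (l m n : ℤ) (u v : ℤ)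
    (hu : ((q₂ * q₄ : ℕ) : ℤ) * u ≡ 1 [ZMOD ((q₁ * q₃ : ℕ) : ℤ)])
    (hv : ((q₁ * q₃ : ℕ) : ℤ) * v ≡ 1 [ZMOD ((q₂ * q₄ : ℕ) : ℤ)]) :
    lam (q₁ * q₂) (q₃ * q₄) l m n =
      lam q₁ q₃ (l * u) (m * u) (n * u) * lam q₂ q₄ (l * v) (m * v) (n * v) := by
  have hA : q₁ * q₃ ≠ 0 := by positivity
  have hB : q₂ * q₄ ≠ 0 := by positivity
  have : NeZero (q₁ * q₃) := ⟨hA⟩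
  have : NeZero (q₂ * q₄) := ⟨hB⟩
  have hAB : (q₁ * q₃).Coprime (q₂ * q₄) := by
    simp only [Nat.coprime_mul_iff_left, Nat.coprime_mul_iff_right] at hco₁ ⊢
    exact ⟨⟨hco₂, hco₁.1.2.symm⟩, hco₁.2.1, hco₃⟩
  rw [lam_eq_sum_zmod _ _ _ _ _ (mul_mul_mul_comm q₁ q₂ q₃ q₄), lam_eq_sum_zmod q₁ q₃ _ _ _ rfl,
    lam_eq_sum_zmod q₂ q₄ _ _ _ rfl, ← ZMod.sum_cast_mul_cast_of_coprime hAB]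
  simp only [lamTerm_mul hA hB hco₂ hco₃ hu hv]
  refine Fintype.sum_congr _ _ fun x => Fintype.sum_congr _ _ fun y => Fintype.sum_congr _ _
    fun z => ?_
  congr 1 <;> exact lamTerm_congr _ _ _ (ZMod.val_modEq_val_cast _ x)
    (ZMod.val_modEq_val_cast _ y) (ZMod.val_modEq_val_cast _ z)
end

section
/- Let q₁, q₂ be coprime positive integers with 8 ∤ q₁q₂, and let λ(q₁, q₂) be the number of triples (x, y, z) with 1 ≤ x, y, z ≤ q₁q₂ satisfying x²+y²+z²+z+1 ≡ 0 (mod q₁) and x²+y²+z²+z+2 ≡ 0 (mod q₂). Then for every ε > 0, λ(q₁, q₂) ≪_ε (q₁q₂)^{2+ε}. -/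
open Finset

/-- λ(q₁, q₂): the number of triples (x,y,z), 1 ≤ x,y,z ≤ q₁q₂, with
x²+y²+z²+z+1 ≡ 0 (mod q₁) and x²+y²+z²+z+2 ≡ 0 (mod q₂). -/
def lamCount (q₁ q₂ : ℕ) : ℕ :=
  (((Finset.Icc 1 (q₁ * q₂)) ×ˢ (Finset.Icc 1 (q₁ * q₂)) ×ˢ (Finset.Icc 1 (q₁ * q₂))).filter
    (fun p => q₁ ∣ (p.1 ^ 2 + p.2.1 ^ 2 + p.2.2 ^ 2 + p.2.2 + 1) ∧
      q₂ ∣ (p.1 ^ 2 + p.2.1 ^ 2 + p.2.2 ^ 2 + p.2.2 + 2))).card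

/-! Fix `z` and put `q = q₁ q₂`. For a counted triple, `w = x² + y² ≤ 2 q²` lies in a residue
class modulo `q₁` and one modulo `q₂` that depend only on `z`, hence (Chinese remainder theorem)
in a single class modulo `q`: at most `2 q + 1` values of `w`. Each `w` is a sum of two positive
squares in at most `2 d(w)²` ways: the representations with `gcd (x, y) = g` come from primitive
representations of `w / g²`, and a primitive representation `(x, y)` of `m` is determined by the
root `x / y` of `t² + 1` modulo `m`, of which there are at most `2 d(m)`. Since
`d(w) ≪ w ^ (ε / 4)`, this gives `λ(q₁, q₂) ≤ q (2 q + 1) · 2 max_{w ≤ 2q²} d(w)² ≪ q ^ (2 + ε)`. -/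

theorem exists_add_one_le_mul_pow {r : ℝ} (hr : 1 < r) :
    ∃ A : ℝ, 1 ≤ A ∧ ∀ a : ℕ, (a + 1 : ℝ) ≤ A * r ^ a := by
  refine ⟨1 + (r - 1)⁻¹, by simp [sub_nonneg.2 hr.le], fun a => ?_⟩
  have hr' : 0 < r - 1 := sub_pos.2 hr
  have h := one_add_mul_le_pow (by linarith : (-2 : ℝ) ≤ r - 1) a
  rw [add_sub_cancel] at h
  calc (a + 1 : ℝ) ≤ (1 + (r - 1)⁻¹) * (1 + a * (r - 1)) := by
        field_simp
        nlinarith [mul_nonneg (mul_nonneg a.cast_nonneg hr'.le) hr'.le]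
    _ ≤ (1 + (r - 1)⁻¹) * r ^ a := by gcongr

theorem exists_card_divisors_le_mul_rpow {ε : ℝ} (hε : 0 < ε) :
    ∃ C : ℝ, 0 < C ∧ ∀ n : ℕ, (#n.divisors : ℝ) ≤ C * (n : ℝ) ^ ε := by
  obtain ⟨A, hA, hAa⟩ := exists_add_one_le_mul_pow (Real.one_lt_rpow one_lt_two hε)
  set K := ⌈(2 : ℝ) ^ ε⁻¹⌉₊
  refine ⟨A ^ K, by positivity, fun n => ?_⟩
  rcases eq_or_ne n 0 with rfl | hn
  · simp [Real.zero_rpow hε.ne']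
  -- for `p ≥ K` already `a + 1 ≤ 2 ^ a ≤ (p ^ ε) ^ a`: only primes below `K` cost a factor `A`
  have hfactor : ∀ p ∈ n.primeFactors, (n.factorization p + 1 : ℝ) ≤
      (if p < K then A else 1) * ((p : ℝ) ^ ε) ^ n.factorization p := by
    intro p hp
    have hp2 : (2 : ℝ) ≤ p := by exact_mod_cast (Nat.prime_of_mem_primeFactors hp).two_le
    split_ifs with hpK
    · calc _ ≤ A * ((2 : ℝ) ^ ε) ^ n.factorization p := hAa _
        _ ≤ A * ((p : ℝ) ^ ε) ^ n.factorization p := by gcongr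
    · have h2p : (2 : ℝ) ≤ (p : ℝ) ^ ε := by
        calc (2 : ℝ) = ((2 : ℝ) ^ ε⁻¹) ^ ε := (Real.rpow_inv_rpow zero_le_two hε.ne').symm
          _ ≤ (p : ℝ) ^ ε := by
            gcongr
            exact (Nat.le_ceil _).trans (by exact_mod_cast not_lt.1 hpK)
      calc _ ≤ (2 : ℝ) ^ n.factorization p := by exact_mod_cast Nat.lt_two_pow_self
        _ ≤ 1 * ((p : ℝ) ^ ε) ^ n.factorization p := by rw [one_mul]; gcongr
  have hsmall : ∏ p ∈ n.primeFactors, (if p < K then A else 1) ≤ A ^ K := by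
    rw [← prod_filter, prod_const]
    exact pow_le_pow_right₀ hA <| (card_le_card fun p hp => mem_range.2 (mem_filter.1 hp).2).trans
      (card_range K).le
  have hprod : ∏ p ∈ n.primeFactors, ((p : ℝ) ^ ε) ^ n.factorization p = (n : ℝ) ^ ε := by
    conv_rhs => rw [← Nat.prod_factorization_pow_eq_self hn]
    rw [Nat.prod_factorization_eq_prod_primeFactors, Nat.cast_prod,
      ← Real.finsetProd_rpow _ _ fun p _ => by positivity]
    exact prod_congr rfl fun p _ => by rw [Real.rpow_pow_comm (Nat.cast_nonneg p), Nat.cast_pow]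
  calc (#n.divisors : ℝ) = ∏ p ∈ n.primeFactors, (n.factorization p + 1 : ℝ) := by
        rw [Nat.card_divisors hn]; push_cast; rfl
    _ ≤ ∏ p ∈ n.primeFactors, (if p < K then A else 1) * ((p : ℝ) ^ ε) ^ n.factorization p :=
        prod_le_prod (fun _ _ => by positivity) hfactor
    _ ≤ A ^ K * (n : ℝ) ^ ε := by
        rw [prod_mul_distrib, hprod]
        gcongr

theorem two_mul_sub_eq_zero_of_sq_add_one_eq_zero {R : Type*} [CommRing R] {s t t' : R}
    (hs : s ^ 2 + 1 = 0) (ht : t ^ 2 + 1 = 0) (ht' : t' ^ 2 + 1 = 0)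
    (h : s - t ∣ s - t') (h' : s - t' ∣ s - t) : 2 * (t - t') = 0 := by
  obtain ⟨c, hc⟩ := h
  obtain ⟨c', hc'⟩ := h'
  have h₁ : (s - t') * (s + t) = 0 := by rw [hc]; linear_combination c * (hs - ht)
  have h₂ : (s - t) * (s + t') = 0 := by rw [hc']; linear_combination c' * (hs - ht')
  linear_combination (-s) * (h₁ - h₂) + 2 * (t - t') * hs

theorem ZMod.dvd_of_gcd_val_eq {n : ℕ} [NeZero n] {a b : ZMod n}
    (h : a.val.gcd n = b.val.gcd n) : a ∣ b :=
  calc a ∣ (a.val.gcd n : ZMod n) := ⟨a⁻¹, (ZMod.mul_inv_eq_gcd a).symm⟩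
    _ = (b.val.gcd n : ZMod n) := by rw [h]
    _ ∣ b := by simpa using Nat.cast_dvd_cast (α := ZMod n) (Nat.gcd_dvd_left b.val n)

theorem ZMod.card_sq_add_one_eq_zero_le (m : ℕ) [NeZero m] :
    #{t : ZMod m | t ^ 2 + 1 = 0} ≤ 2 * #m.divisors := by
  rcases ({t : ZMod m | t ^ 2 + 1 = 0} : Finset _).eq_empty_or_nonempty with h | ⟨s, hs⟩
  · simp [h]
  rw [mem_filter_univ] at hs
  -- two roots `t, t'` with `gcd (s - t, m) = gcd (s - t', m)` satisfy `2 (t - t') = 0`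
  refine card_le_mul_card_image_of_maps_to (f := fun t => (s - t).val.gcd m)
    (fun t _ => Nat.mem_divisors.2 ⟨Nat.gcd_dvd_right _ _, NeZero.ne m⟩) 2 fun d _ => ?_
  rcases ({t ∈ {t : ZMod m | t ^ 2 + 1 = 0} | (s - t).val.gcd m = d} : Finset _)
    |>.eq_empty_or_nonempty with h | ⟨t₀, ht₀⟩
  · simp [h]
  simp only [mem_filter, mem_univ, true_and] at ht₀
  calc _ ≤ #{u : ZMod m | 2 • u = 0} := by
        refine card_le_card_of_injOn (· - t₀) (fun t ht => ?_) (sub_left_injective.injOn)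
        simp only [coe_filter, mem_filter_univ, mem_univ, true_and, Set.mem_ofPred_eq] at ht ⊢
        rw [nsmul_eq_mul, Nat.cast_ofNat]
        exact two_mul_sub_eq_zero_of_sq_add_one_eq_zero hs ht.1 ht₀.1
          (ZMod.dvd_of_gcd_val_eq (ht.2.trans ht₀.2.symm))
          (ZMod.dvd_of_gcd_val_eq (ht₀.2.trans ht.2.symm))
    _ ≤ 2 := IsAddCyclic.card_nsmul_eq_zero_le two_pos

def sumTwoSqReps (n : ℕ) : Finset (ℕ × ℕ) :=
  {p ∈ Icc 1 n ×ˢ Icc 1 n | p.1 ^ 2 + p.2 ^ 2 = n}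

theorem mem_sumTwoSqReps {n : ℕ} {p : ℕ × ℕ} :
    p ∈ sumTwoSqReps n ↔ 0 < p.1 ∧ 0 < p.2 ∧ p.1 ^ 2 + p.2 ^ 2 = n := by
  simp only [sumTwoSqReps, mem_filter, mem_product, mem_Icc]
  constructor
  · rintro ⟨⟨⟨h₁, -⟩, h₂, -⟩, h⟩
    exact ⟨h₁, h₂, h⟩
  · rintro ⟨h₁, h₂, rfl⟩
    refine ⟨⟨⟨h₁, ?_⟩, h₂, ?_⟩, rfl⟩ <;> nlinarith

theorem Nat.Coprime.eq_and_eq_of_mul_eq_mul {a b c d : ℕ} (hab : a.Coprime b) (hcd : c.Coprime d)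
    (h : a * d = c * b) : a = c ∧ b = d := by
  have hbd : b = d := Nat.dvd_antisymm (hab.symm.dvd_of_dvd_mul_left ⟨c, by rw [h, mul_comm]⟩)
    (hcd.symm.dvd_of_dvd_mul_left ⟨a, by rw [← h, mul_comm]⟩)
  subst hbd
  rcases eq_or_ne b 0 with rfl | hb
  · simp_all
  · exact ⟨Nat.eq_of_mul_eq_mul_right (Nat.pos_of_ne_zero hb) h, rfl⟩

theorem eq_of_sq_add_sq_eq_of_dvd_sub {n x y x' y' : ℤ} (hx : 0 < x) (hy : 0 < y) (hx' : 0 < x')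
    (hy' : 0 < y') (h : x ^ 2 + y ^ 2 = n) (h' : x' ^ 2 + y' ^ 2 = n) (hdvd : n ∣ x * y' - x' * y) :
    x * y' = x' * y := by
  -- `(x y' - x' y)² + (x x' + y y')² = n²` and `x x' + y y' > 0`, so `|x y' - x' y| < n`
  have hsq : (x * y' - x' * y) ^ 2 < n ^ 2 := by
    have hid : (x * y' - x' * y) ^ 2 + (x * x' + y * y') ^ 2 = n ^ 2 := by
      rw [sq n]; nth_rewrite 1 [← h]; rw [← h']; ring
    have : 0 < (x * x' + y * y') ^ 2 := by positivity
    linarith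
  have hn : 0 < n := by rw [← h]; positivity
  have := Int.eq_zero_of_abs_lt_dvd hdvd (abs_lt_of_sq_lt_sq hsq hn.le)
  linarith

theorem card_coprime_sumTwoSqReps_le (n : ℕ) :
    #{p ∈ sumTwoSqReps n | p.1.Coprime p.2} ≤ 2 * #n.divisors := by
  rcases eq_or_ne n 0 with rfl | hn
  · simp [sumTwoSqReps]
  have : NeZero n := ⟨hn⟩
  have hunit : ∀ p ∈ sumTwoSqReps n, p.1.Coprime p.2 →
      (p.2 : ZMod n) * (p.2 : ZMod n)⁻¹ = 1 := by
    intro p hp hcop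
    obtain ⟨-, -, hsum⟩ := mem_sumTwoSqReps.1 hp
    refine ZMod.mul_inv_of_unit _ ((ZMod.isUnit_iff_coprime _ _).2 ?_)
    rw [← hsum, sq p.2]
    exact (Nat.coprime_add_mul_right_right _ _ _).2 (hcop.symm.pow_right 2)
  have hzero : ∀ p ∈ sumTwoSqReps n, (p.1 : ZMod n) ^ 2 + (p.2 : ZMod n) ^ 2 = 0 := by
    intro p hp
    exact_mod_cast (ZMod.natCast_eq_zero_iff _ _).2 (mem_sumTwoSqReps.1 hp).2.2.symm.dvd
  refine (card_le_card_of_injOn (fun p => (p.1 : ZMod n) * (p.2 : ZMod n)⁻¹) (fun p hp => ?_)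
    (fun p hp p' hp' heq => ?_)).trans (ZMod.card_sq_add_one_eq_zero_le n)
  · obtain ⟨hpS, hcop⟩ := mem_filter.1 hp
    simp only [coe_filter, Set.mem_ofPred_eq, mem_univ, true_and]
    linear_combination ((p.2 : ZMod n)⁻¹) ^ 2 * hzero p hpS
      - ((p.2 : ZMod n) * (p.2 : ZMod n)⁻¹ + 1) * hunit p hpS hcop
  · obtain ⟨hpS, hcop⟩ := mem_filter.1 hp
    obtain ⟨hpS', hcop'⟩ := mem_filter.1 hp'
    obtain ⟨hx, hy, hsum⟩ := mem_sumTwoSqReps.1 hpS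
    obtain ⟨hx', hy', hsum'⟩ := mem_sumTwoSqReps.1 hpS'
    have hcross : ((p.1 * p'.2 : ℤ) : ZMod n) - ((p'.1 * p.2 : ℤ) : ZMod n) = 0 := by
      push_cast
      linear_combination ((p.2 : ZMod n) * p'.2) * heq - (p.1 * p'.2 : ZMod n) * hunit p hpS hcop
        + (p'.1 * p.2 : ZMod n) * hunit p' hpS' hcop'
    rw [← Int.cast_sub, ZMod.intCast_zmod_eq_zero_iff_dvd] at hcross
    have hmul : p.1 * p'.2 = p'.1 * p.2 := by
      have := eq_of_sq_add_sq_eq_of_dvd_sub (n := n) (by exact_mod_cast hx) (by exact_mod_cast hy)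
        (by exact_mod_cast hx') (by exact_mod_cast hy') (by exact_mod_cast hsum)
        (by exact_mod_cast hsum') hcross
      exact_mod_cast this
    obtain ⟨h₁, h₂⟩ := hcop.eq_and_eq_of_mul_eq_mul hcop' hmul
    exact Prod.ext h₁ h₂

theorem card_sumTwoSqReps_le (n : ℕ) : #(sumTwoSqReps n) ≤ 2 * #n.divisors ^ 2 := by
  rcases eq_or_ne n 0 with rfl | hn
  · simp [sumTwoSqReps]
  have hgcd_sq_dvd : ∀ p ∈ sumTwoSqReps n, p.1.gcd p.2 ^ 2 ∣ n := by
    intro p hp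
    rw [← (mem_sumTwoSqReps.1 hp).2.2]
    exact dvd_add (pow_dvd_pow_of_dvd (Nat.gcd_dvd_left _ _) 2)
      (pow_dvd_pow_of_dvd (Nat.gcd_dvd_right _ _) 2)
  -- dividing a representation by `g = gcd (x, y)` gives a primitive representation of `n / g²`
  have hfibre : ∀ g ∈ n.divisors, #{p ∈ sumTwoSqReps n | p.1.gcd p.2 = g} ≤ 2 * #n.divisors := by
    intro g _
    rcases ({p ∈ sumTwoSqReps n | p.1.gcd p.2 = g}).eq_empty_or_nonempty with h | ⟨p₀, hp₀⟩
    · simp [h]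
    rw [mem_filter] at hp₀
    have hg : g ^ 2 ∣ n := hp₀.2 ▸ hgcd_sq_dvd p₀ hp₀.1
    have hsub : {p ∈ sumTwoSqReps n | p.1.gcd p.2 = g} ⊆
        {q ∈ sumTwoSqReps (n / g ^ 2) | q.1.Coprime q.2}.image fun q => (q.1 * g, q.2 * g) := by
      intro p hp
      rw [mem_filter, mem_sumTwoSqReps] at hp
      obtain ⟨⟨hx, hy, hsum⟩, hgp⟩ := hp
      obtain ⟨a, b, hab, ha, hb⟩ := Nat.exists_coprime p.1 p.2
      rw [hgp] at ha hb
      have hg0 : 0 < g := hgp ▸ Nat.gcd_pos_of_pos_left _ hx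
      refine mem_image.2 ⟨(a, b), mem_filter.2 ⟨mem_sumTwoSqReps.2 ⟨?_, ?_, ?_⟩, hab⟩, ?_⟩
      · exact Nat.pos_of_mul_pos_right (ha ▸ hx)
      · exact Nat.pos_of_mul_pos_right (hb ▸ hy)
      · rw [← hsum, ha, hb]
        exact (Nat.div_eq_of_eq_mul_left (by positivity) (by ring)).symm
      · exact Prod.ext ha.symm hb.symm
    calc _ ≤ #{q ∈ sumTwoSqReps (n / g ^ 2) | q.1.Coprime q.2} :=
          (card_le_card hsub).trans card_image_le
      _ ≤ 2 * #(n / g ^ 2).divisors := card_coprime_sumTwoSqReps_le _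
      _ ≤ 2 * #n.divisors := by
          gcongr
          exact Nat.div_dvd_of_dvd hg
  calc #(sumTwoSqReps n) ≤ 2 * #n.divisors * #n.divisors :=
        card_le_mul_card_image_of_maps_to (fun p hp => Nat.mem_divisors.2
          ⟨(dvd_pow_self _ two_ne_zero).trans (hgcd_sq_dvd p hp), hn⟩) _ hfibre
    _ = 2 * #n.divisors ^ 2 := by ring

theorem card_le_of_lt_mul_of_modEq {s : Finset ℕ} {n k : ℕ} (hs : ∀ a ∈ s, a < n * k)
    (h : ∀ a ∈ s, ∀ b ∈ s, a ≡ b [MOD n]) : #s ≤ k :=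
  calc #s ≤ #(range k) := card_le_card_of_injOn (· / n)
        (fun a ha => mem_range.2 (Nat.div_lt_of_lt_mul (hs a ha)))
        (fun a ha b hb hab => by
          rw [← Nat.mod_add_div a n, ← Nat.mod_add_div b n, h a ha b hb,
            show a / n = b / n from hab])
    _ = k := card_range k

theorem Nat.modEq_of_dvd_add_of_dvd_add {m c a b : ℕ} (ha : m ∣ a + c) (hb : m ∣ b + c) :
    a ≡ b [MOD m] :=
  Nat.ModEq.add_right_cancel' c
    ((Nat.modEq_zero_iff_dvd.2 ha).trans (Nat.modEq_zero_iff_dvd.2 hb).symm)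

theorem lamCount_le {q₁ q₂ : ℕ} (hco : q₁.Coprime q₂) {B : ℝ}
    (hB : ∀ w ≤ 2 * (q₁ * q₂) ^ 2, (#(sumTwoSqReps w) : ℝ) ≤ B) :
    (lamCount q₁ q₂ : ℝ) ≤ (q₁ * q₂ : ℕ) * (2 * (q₁ * q₂ : ℕ) + 1) * B := by
  set q := q₁ * q₂
  -- for fixed `z`, the sum `w = x² + y²` is at most `2 q²` and determined modulo `q`
  set W : ℕ → Finset ℕ :=
    fun z => {w ∈ range (2 * q ^ 2 + 1) | q₁ ∣ w + (z ^ 2 + z + 1) ∧ q₂ ∣ w + (z ^ 2 + z + 2)}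
  have hW : ∀ z ∈ Icc 1 q, #(W z) ≤ 2 * q + 1 := fun z hz =>
    card_le_of_lt_mul_of_modEq (fun w hw => (mem_range.1 (mem_filter.1 hw).1).trans_le <| by
        nlinarith [(mem_Icc.1 hz).1, (mem_Icc.1 hz).2]) fun w hw w' hw' => by
      rw [mem_filter] at hw hw'
      exact (Nat.modEq_and_modEq_iff_modEq_mul hco).1
        ⟨Nat.modEq_of_dvd_add_of_dvd_add hw.2.1 hw'.2.1,
          Nat.modEq_of_dvd_add_of_dvd_add hw.2.2 hw'.2.2⟩
  have hsub : {p ∈ Icc 1 q ×ˢ Icc 1 q ×ˢ Icc 1 q |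
      q₁ ∣ p.1 ^ 2 + p.2.1 ^ 2 + p.2.2 ^ 2 + p.2.2 + 1 ∧
      q₂ ∣ p.1 ^ 2 + p.2.1 ^ 2 + p.2.2 ^ 2 + p.2.2 + 2} ⊆
      (Icc 1 q).biUnion fun z =>
        (W z).biUnion fun w => (sumTwoSqReps w).image fun p => (p.1, p.2, z) := by
    rintro ⟨x, y, z⟩ hp
    simp only [mem_filter, mem_product, mem_Icc] at hp
    obtain ⟨⟨⟨hx, hxq⟩, ⟨hy, hyq⟩, hz⟩, h₁, h₂⟩ := hp
    refine mem_biUnion.2 ⟨z, mem_Icc.2 hz, mem_biUnion.2 ⟨x ^ 2 + y ^ 2, mem_filter.2 ⟨?_, ?_, ?_⟩,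
      mem_image.2 ⟨(x, y), mem_sumTwoSqReps.2 ⟨hx, hy, rfl⟩, rfl⟩⟩⟩
    · rw [mem_range]; nlinarith
    · simpa only [add_assoc] using h₁
    · simpa only [add_assoc] using h₂
  have hB0 : 0 ≤ B := (Nat.cast_nonneg _).trans (hB 0 (Nat.zero_le _))
  calc (lamCount q₁ q₂ : ℝ) ≤ ∑ z ∈ Icc 1 q, ∑ w ∈ W z, (#(sumTwoSqReps w) : ℝ) := by
        norm_cast
        refine (card_le_card hsub).trans (card_biUnion_le.trans (sum_le_sum fun z _ => ?_))
        exact card_biUnion_le.trans (sum_le_sum fun w _ => card_image_le)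
    _ ≤ ∑ z ∈ Icc 1 q, ∑ w ∈ W z, B := sum_le_sum fun z _ => sum_le_sum fun w hw =>
          hB w (Nat.lt_succ_iff.1 (mem_range.1 (mem_filter.1 hw).1))
    _ ≤ ∑ z ∈ Icc 1 q, (2 * q + 1 : ℕ) * B := by
        refine sum_le_sum fun z hz => ?_
        rw [sum_const, nsmul_eq_mul]
        gcongr
        exact hW z hz
    _ = (q : ℝ) * (2 * q + 1) * B := by
        rw [sum_const, Nat.card_Icc, nsmul_eq_mul]; push_cast; ring

theorem lamCount_bound (ε : ℝ) (hε : 0 < ε) :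
    ∃ C : ℝ, 0 < C ∧ ∀ q₁ q₂ : ℕ, 0 < q₁ → 0 < q₂ → Nat.Coprime q₁ q₂ →
      ¬ (8 ∣ q₁ * q₂) →
        (lamCount q₁ q₂ : ℝ) ≤ C * ((q₁ * q₂ : ℕ) : ℝ) ^ ((2 : ℝ) + ε) := by
  obtain ⟨C, hC, hdiv⟩ := exists_card_divisors_le_mul_rpow (by positivity : 0 < ε / 4)
  refine ⟨6 * C ^ 2 * 2 ^ (ε / 2), by positivity, fun q₁ q₂ h₁ h₂ hco _ => ?_⟩
  set q := q₁ * q₂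
  have hq : (1 : ℝ) ≤ q := by exact_mod_cast Nat.mul_pos h₁ h₂
  have hreps : ∀ w ≤ 2 * q ^ 2,
      (#(sumTwoSqReps w) : ℝ) ≤ 2 * (C * (2 * (q : ℝ) ^ 2) ^ (ε / 4)) ^ 2 := fun w hw =>
    calc (#(sumTwoSqReps w) : ℝ) ≤ 2 * (#w.divisors : ℝ) ^ 2 := by
          exact_mod_cast card_sumTwoSqReps_le w
      _ ≤ 2 * (C * (2 * (q : ℝ) ^ 2) ^ (ε / 4)) ^ 2 := by
          gcongr
          refine (hdiv w).trans ?_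
          gcongr
          exact_mod_cast hw
  have hrpow : ((2 * (q : ℝ) ^ 2) ^ (ε / 4)) ^ 2 = 2 ^ (ε / 2) * (q : ℝ) ^ ε := by
    rw [← Real.rpow_mul_natCast (by positivity), Real.mul_rpow zero_le_two (by positivity),
      ← Real.rpow_natCast_mul (by positivity)]
    ring_nf
  calc (lamCount q₁ q₂ : ℝ) ≤ q * (2 * q + 1) * (2 * (C * (2 * (q : ℝ) ^ 2) ^ (ε / 4)) ^ 2) :=
        lamCount_le hco hreps
    _ ≤ 3 * q ^ 2 * (2 * (C * (2 * (q : ℝ) ^ 2) ^ (ε / 4)) ^ 2) := by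
        gcongr ?_ * _; nlinarith
    _ = 6 * C ^ 2 * 2 ^ (ε / 2) * (q : ℝ) ^ ((2 : ℝ) + ε) := by
        rw [mul_pow, hrpow, Real.rpow_add (by positivity), Real.rpow_two]
        ring
end

section
/- Let q₁, q₂ be coprime positive integers with 8 ∤ q₁q₂, and H₀ ≥ 2. Then for every ε > 0, ∑_{1 ≤ l, m, n ≤ H₀} |λ*(q₁, q₂, l, m, n)|/(lmn) ≪_ε (q₁q₂)^{2+ε} H₀^ε. -/
open Finset

/-- λ*(a, b, l, m, n): exponential sum over triples (x,y,z) mod ab with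
x²+y²+z+1 ≡ 0 (mod a) and x²+y²+z+2 ≡ 0 (mod b). -/
noncomputable def lamStar (a b : ℕ) (l m n : ℤ) : ℂ :=
  ∑ x ∈ Finset.Icc 1 (a * b), ∑ y ∈ Finset.Icc 1 (a * b), ∑ z ∈ Finset.Icc 1 (a * b),
    if a ∣ (x ^ 2 + y ^ 2 + z + 1) ∧ b ∣ (x ^ 2 + y ^ 2 + z + 2) then
      e (((l * (x : ℤ) + m * (y : ℤ) + n * (z : ℤ) : ℤ) : ℝ) / ((a * b : ℕ) : ℝ))
    else 0

/-!
For fixed `x, y` the two congruences pin down `z` modulo `q₁q₂` (Chinese remainder theorem), so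
`λ*` has at most `(q₁q₂)²` unimodular terms. The weighted sum is then at most `(q₁q₂)²` times the
cube of the harmonic number `H_{H₀} ≤ 1 + log H₀`, and `log H₀ ≤ (3/ε) H₀^{ε/3}`.
-/

lemma norm_e (t : ℝ) : ‖e t‖ = 1 := by
  rw [e, show 2 * Real.pi * Complex.I * t = ((2 * Real.pi * t : ℝ) : ℂ) * Complex.I by
    push_cast; ring]
  exact Complex.norm_exp_ofReal_mul_I _

lemma Nat.ModEq.eq_of_mem_Icc_one {n a b : ℕ} (h : a ≡ b [MOD n]) (ha : a ∈ Icc 1 n)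
    (hb : b ∈ Icc 1 n) : a = b := by
  rw [mem_Icc] at ha hb
  have h' : a - 1 ≡ b - 1 [MOD n] :=
    Nat.ModEq.add_right_cancel' 1 (by rwa [Nat.sub_add_cancel ha.1, Nat.sub_add_cancel hb.1])
  have := h'.eq_of_lt_of_lt (by omega) (by omega)
  omega

lemma Nat.modEq_of_dvd_add_of_dvd_add_s15 {n s z₁ z₂ : ℕ} (c : ℕ) (h₁ : n ∣ s + z₁ + c)
    (h₂ : n ∣ s + z₂ + c) : z₁ ≡ z₂ [MOD n] := by
  have h : s + z₁ + c ≡ s + z₂ + c [MOD n] :=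
    (Nat.modEq_zero_iff_dvd.2 h₁).trans (Nat.modEq_zero_iff_dvd.2 h₂).symm
  exact (h.add_right_cancel' c).add_left_cancel' s

lemma card_filter_dvd_and_dvd_le_one {a b : ℕ} (hab : a.Coprime b) (s : ℕ) :
    #{z ∈ Icc 1 (a * b) | a ∣ s + z + 1 ∧ b ∣ s + z + 2} ≤ 1 := by
  refine card_le_one.2 fun z₁ hz₁ z₂ hz₂ => ?_
  rw [mem_filter] at hz₁ hz₂
  refine Nat.ModEq.eq_of_mem_Icc_one ?_ hz₁.1 hz₂.1
  exact (Nat.modEq_and_modEq_iff_modEq_mul hab).1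
    ⟨Nat.modEq_of_dvd_add_of_dvd_add_s15 1 hz₁.2.1 hz₂.2.1,
      Nat.modEq_of_dvd_add_of_dvd_add_s15 2 hz₁.2.2 hz₂.2.2⟩

lemma norm_sum_ite_e_le_card {ι : Type*} (s : Finset ι) (p : ι → Prop) [DecidablePred p]
    (f : ι → ℝ) : ‖∑ i ∈ s, if p i then e (f i) else 0‖ ≤ #{i ∈ s | p i} := by
  rw [← sum_filter, card_eq_sum_ones, Nat.cast_sum]
  exact (norm_sum_le _ _).trans_eq (sum_congr rfl fun i _ => by rw [norm_e, Nat.cast_one])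

lemma norm_lamStar_le {a b : ℕ} (hab : a.Coprime b) (l m n : ℤ) :
    ‖lamStar a b l m n‖ ≤ ((a * b : ℕ) : ℝ) ^ 2 := by
  have inner (x y : ℕ) : ‖∑ z ∈ Icc 1 (a * b),
      if a ∣ x ^ 2 + y ^ 2 + z + 1 ∧ b ∣ x ^ 2 + y ^ 2 + z + 2 then
        e (((l * (x : ℤ) + m * (y : ℤ) + n * (z : ℤ) : ℤ) : ℝ) / ((a * b : ℕ) : ℝ))
      else 0‖ ≤ 1 :=
    (norm_sum_ite_e_le_card _ _ _).trans
      (by exact_mod_cast card_filter_dvd_and_dvd_le_one hab (x ^ 2 + y ^ 2))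
  calc ‖lamStar a b l m n‖
      ≤ ∑ _x ∈ Icc 1 (a * b), ∑ _y ∈ Icc 1 (a * b), (1 : ℝ) :=
        (norm_sum_le _ _).trans <| sum_le_sum fun x _ =>
          (norm_sum_le _ _).trans <| sum_le_sum fun y _ => inner x y
    _ = ((a * b : ℕ) : ℝ) ^ 2 := by simp [sq]

lemma harmonic_le_rpow {δ : ℝ} (hδ : 0 < δ) {n : ℕ} (hn : 1 ≤ n) :
    (harmonic n : ℝ) ≤ (1 + 1 / δ) * (n : ℝ) ^ δ := by
  have hlog : Real.log n ≤ (n : ℝ) ^ δ / δ := Real.log_le_rpow_div n.cast_nonneg hδ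
  have hone : (1 : ℝ) ≤ (n : ℝ) ^ δ := Real.one_le_rpow (by exact_mod_cast hn) hδ.le
  calc (harmonic n : ℝ) ≤ 1 + Real.log n := harmonic_le_one_add_log n
    _ ≤ (n : ℝ) ^ δ + (n : ℝ) ^ δ / δ := by linarith
    _ = (1 + 1 / δ) * (n : ℝ) ^ δ := by ring

lemma sum_sum_sum_mul_eq_pow_three {ι : Type*} (s : Finset ι) (f : ι → ℝ) :
    ∑ i ∈ s, ∑ j ∈ s, ∑ k ∈ s, f i * f j * f k = (∑ i ∈ s, f i) ^ 3 := by
  rw [pow_three', sum_mul_sum, sum_mul]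
  simp_rw [sum_mul, mul_sum]

lemma sum_Icc_inv_eq_harmonic (n : ℕ) : ∑ i ∈ Icc 1 n, ((i : ℝ))⁻¹ = harmonic n := by
  simp [harmonic_eq_sum_Icc]

theorem lamStar_triple_sum_bound (ε : ℝ) (hε : 0 < ε) :
    ∃ C : ℝ, 0 < C ∧ ∀ q₁ q₂ H₀ : ℕ, 0 < q₁ → 0 < q₂ → Nat.Coprime q₁ q₂ →
      ¬ (8 ∣ q₁ * q₂) → 2 ≤ H₀ →
        ∑ l ∈ Finset.Icc 1 H₀, ∑ m ∈ Finset.Icc 1 H₀, ∑ n ∈ Finset.Icc 1 H₀,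
            ‖lamStar q₁ q₂ (l : ℤ) (m : ℤ) (n : ℤ)‖ / ((l * m * n : ℕ) : ℝ) ≤
          C * ((q₁ * q₂ : ℕ) : ℝ) ^ ((2 : ℝ) + ε) * (H₀ : ℝ) ^ (ε : ℝ) := by
  refine ⟨(1 + 1 / (ε / 3)) ^ 3, by positivity, fun q₁ q₂ H₀ hq₁ hq₂ hco _ hH₀ => ?_⟩
  set Q : ℝ := ((q₁ * q₂ : ℕ) : ℝ)
  have hQ : 1 ≤ Q := Nat.one_le_cast.2 (Nat.mul_pos hq₁ hq₂)
  have hharm₀ : (0 : ℝ) ≤ harmonic H₀ := by exact_mod_cast (harmonic_pos (by omega)).le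
  have hharm := harmonic_le_rpow (by positivity : 0 < ε / 3) (by omega : 1 ≤ H₀)
  calc ∑ l ∈ Icc 1 H₀, ∑ m ∈ Icc 1 H₀, ∑ n ∈ Icc 1 H₀,
        ‖lamStar q₁ q₂ (l : ℤ) (m : ℤ) (n : ℤ)‖ / ((l * m * n : ℕ) : ℝ)
      ≤ ∑ l ∈ Icc 1 H₀, ∑ m ∈ Icc 1 H₀, ∑ n ∈ Icc 1 H₀,
          Q ^ 2 * (((l : ℝ))⁻¹ * ((m : ℝ))⁻¹ * ((n : ℝ))⁻¹) := by
        gcongr with l _ m _ n _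
        rw [div_eq_mul_inv, Nat.cast_mul, Nat.cast_mul, mul_inv, mul_inv]
        gcongr
        exact norm_lamStar_le hco _ _ _
    _ = Q ^ 2 * (harmonic H₀ : ℝ) ^ 3 := by
        simp only [← sum_Icc_inv_eq_harmonic, ← sum_sum_sum_mul_eq_pow_three, mul_sum]
    _ ≤ Q ^ ((2 : ℝ) + ε) * ((1 + 1 / (ε / 3)) * (H₀ : ℝ) ^ (ε / 3)) ^ 3 := by
        refine mul_le_mul ?_ (pow_le_pow_left₀ hharm₀ hharm 3) (by positivity)
          (Real.rpow_nonneg (zero_le_one.trans hQ) _)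
        exact_mod_cast Real.rpow_le_rpow_of_exponent_le hQ (by linarith : (2 : ℝ) ≤ 2 + ε)
    _ = (1 + 1 / (ε / 3)) ^ 3 * Q ^ ((2 : ℝ) + ε) * (H₀ : ℝ) ^ ε := by
        rw [mul_pow, ← Real.rpow_mul_natCast (by positivity)]
        ring_nf
end
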